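/- Let D^(s)_min = {x ∈ V : (x,α) ≥ −1 for α ∈ Π_s, (x,α) ≥ 0 for α ∈ Π_l, and (x,θ) ≤ 1}. Then: (1) an element w = v·t_r ∈ Ŵ is s-minimal if and only if w is dominant and v(r) ∈ D^(s)_min ∩ Q∨; (2) the map Ŵ^(s)_min → D^(s)_min ∩ Q∨ sending w = v·t_r to v(r) is a bijection. -/

import Mathlib

open scoped RealInnerProductSpace
open Module

noncomputable section

variable {V : Type*} [NormedAddCommGroup V] [InnerProductSpace ℝ V]

/-- The underlying function of the orthogonal reflection in the hyperplane
orthogonal to `α` (the identity if `α = 0`). -/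
def reflFun (α : V) (x : V) : V := x - (2 * ⟪α, x⟫ / ⟪α, α⟫) • α

lemma reflFun_involutive (α : V) : Function.Involutive (reflFun α) := by
  intro x
  by_cases h : α = 0
  · simp [reflFun, h]
  · have hs : ⟪α, α⟫ ≠ 0 := inner_self_ne_zero.mpr h
    have h1 : ⟪α, x - (2 * ⟪α, x⟫ / ⟪α, α⟫) • α⟫ = -⟪α, x⟫ := by
      rw [inner_sub_right, real_inner_smul_right]
      field_simp
      ring
    simp only [reflFun]
    rw [h1, show 2 * -⟪α, x⟫ / ⟪α, α⟫ = -(2 * ⟪α, x⟫ / ⟪α, α⟫) by ring,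
      neg_smul, sub_neg_eq_add]
    abel

/-- The orthogonal reflection in the hyperplane orthogonal to `α`, as a linear
equivalence (the identity if `α = 0`). -/
def sRefl (α : V) : V ≃ₗ[ℝ] V where
  toFun := reflFun α
  map_add' x y := by
    simp only [reflFun, inner_add_right]
    rw [show 2 * (⟪α, x⟫ + ⟪α, y⟫) / ⟪α, α⟫
        = 2 * ⟪α, x⟫ / ⟪α, α⟫ + 2 * ⟪α, y⟫ / ⟪α, α⟫ by ring, add_smul]
    abel
  map_smul' c x := by
    simp only [reflFun, real_inner_smul_right, RingHom.id_apply, smul_sub, smul_smul]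
    congr 2
    ring
  invFun := reflFun α
  left_inv := reflFun_involutive α
  right_inv := reflFun_involutive α

/-- The coroot `α∨ = 2α/(α,α)` of a vector `α`. -/
def corootVec (α : V) : V := (2 / ⟪α, α⟫) • α

/-- The (affine) hyperplane `{x | (x, μ) = k}`. -/
def rootHyperplane (μ : V) (k : ℝ) : Set V := {x : V | ⟪x, μ⟫ = k}

/-- `R` is a region of the hyperplane arrangement whose hyperplanes are encoded by the
pairs `(μ, k) ∈ A` (the hyperplane `{x | (x,μ) = k}`): a connected component of the
complement of the union of the hyperplanes. -/
def IsRegionOf (A : Set (V × ℝ)) (R : Set V) : Prop :=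
  ∃ x ∈ (⋃ h ∈ A, rootHyperplane h.1 h.2)ᶜ,
    R = connectedComponentIn (⋃ h ∈ A, rootHyperplane h.1 h.2)ᶜ x

open Classical in
/-- The characteristic polynomial of the hyperplane arrangement encoded by
`A : Set (V × ℝ)` in an ambient space of dimension `p`, evaluated at `t`, via
Whitney's theorem: `χ(A,t) = ∑ (-1)^{#S} t^{dim ∩ S}`, the sum being over all central
subarrangements `S ⊆ A` (junk value `0` if `A` is infinite). -/
noncomputable def charPolyEval (p : ℕ) (A : Set (V × ℝ)) (t : ℝ) : ℝ :=
  if hA : A.Finite then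
    ∑ S ∈ hA.toFinset.powerset,
      if (⋂ h ∈ (S : Set (V × ℝ)), rootHyperplane h.1 h.2).Nonempty then
        (-1 : ℝ) ^ S.card *
          t ^ (p - Module.finrank ℝ (Submodule.span ℝ (Prod.fst '' (S : Set (V × ℝ)))))
      else 0
  else 0

/-- The linear action of `w = v·t_r ∈ Ŵ` on `V ⊕ ℝδ`:
`w(μ + kδ) = v(μ) + (k - (μ,r))δ`. -/
def affAct (v : V ≃ₗ[ℝ] V) (r : V) (β : V × ℝ) : V × ℝ :=
  (v β.1, β.2 - ⟪β.1, r⟫)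

/-- The linear action of `w⁻¹` on `V ⊕ ℝδ`, for `w = v·t_r ∈ Ŵ`:
`w⁻¹(μ + kδ) = v⁻¹(μ) + (k + (v⁻¹μ, r))δ`. -/
def affActInv (v : V ≃ₗ[ℝ] V) (r : V) (β : V × ℝ) : V × ℝ :=
  (v.symm β.1, β.2 + ⟪v.symm β.1, r⟫)

/-- The affine `∗`-action of `w = v·t_r ∈ Ŵ` on `V`: `w ∗ x = v(x + r)`. -/
def affStar (v : V ≃ₗ[ℝ] V) (r : V) (x : V) : V := v (x + r)

/-- The affine `∗`-action of `w⁻¹` on `V`, for `w = v·t_r ∈ Ŵ`: `w⁻¹ ∗ x = v⁻¹(x) - r`. -/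
def affStarInv (v : V ≃ₗ[ℝ] V) (r : V) (x : V) : V := v.symm x - r

/-- An irreducible reduced crystallographic root system `Δ` of rank `p`, spanning a real
inner product space `V`, together with a choice of positive system `Δ⁺ = pos`, simple
roots `α₁, …, α_p`, and the highest root `θ`. -/
structure RootSystemData (V : Type*) [NormedAddCommGroup V] [InnerProductSpace ℝ V]
    (p : ℕ) where
  /-- the set of roots -/
  Δ : Set V
  finite : Δ.Finite
  zero_notMem : (0 : V) ∉ Δ
  span_eq_top : Submodule.span ℝ Δ = ⊤
  finrank_eq : Module.finrank ℝ V = p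
  neg_mem : ∀ α ∈ Δ, -α ∈ Δ
  /-- reduced: the only multiples of a root that are roots are `±α` -/
  reduced : ∀ α ∈ Δ, ∀ c : ℝ, c • α ∈ Δ → c = 1 ∨ c = -1
  /-- crystallographic: Cartan integers -/
  crystallographic : ∀ α ∈ Δ, ∀ β ∈ Δ, ∃ n : ℤ, 2 * ⟪α, β⟫ / ⟪α, α⟫ = (n : ℝ)
  reflect_mem : ∀ α ∈ Δ, ∀ β ∈ Δ, sRefl α β ∈ Δ
  /-- irreducible: no splitting into two orthogonal parts -/
  irred : ∀ S T : Set V, Δ = S ∪ T → (∀ a ∈ S, ∀ b ∈ T, ⟪a, b⟫ = 0) → S = ∅ ∨ T = ∅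
  /-- the simple roots `α₁, …, α_p` -/
  simpleRoot : Fin p → V
  simpleRoot_mem : ∀ i, simpleRoot i ∈ Δ
  simpleRoot_indep : LinearIndependent ℝ simpleRoot
  /-- the positive roots `Δ⁺` -/
  pos : Set V
  pos_def : pos = {α ∈ Δ | ∃ c : Fin p → ℕ, α = ∑ i, (c i : ℝ) • simpleRoot i}
  pos_or_neg : ∀ α ∈ Δ, α ∈ pos ∨ -α ∈ pos
  /-- the highest root -/
  θ : V
  θ_mem : θ ∈ pos
  θ_highest : ∀ α ∈ pos, ∃ c : Fin p → ℕ, θ = α + ∑ i, (c i : ℝ) • simpleRoot i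

namespace RootSystemData

variable {p : ℕ} (RS : RootSystemData V p)

/-- The coroot lattice `Q∨`, generated by the coroots of the roots. -/
def corootLattice : AddSubgroup V := AddSubgroup.closure (corootVec '' RS.Δ)

/-- The coweight lattice `P∨ = {x | (x, α) ∈ ℤ for all roots α}`. -/
def coweightLattice : AddSubgroup V where
  carrier := {x : V | ∀ α ∈ RS.Δ, ∃ n : ℤ, ⟪x, α⟫ = (n : ℝ)}
  zero_mem' := fun α _ => ⟨0, by simp⟩
  add_mem' := by
    intro x y hx hy α hα
    obtain ⟨n, hn⟩ := hx α hα
    obtain ⟨m, hm⟩ := hy α hα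
    exact ⟨n + m, by rw [inner_add_left, hn, hm]; push_cast; ring⟩
  neg_mem' := by
    intro x hx α hα
    obtain ⟨n, hn⟩ := hx α hα
    exact ⟨-n, by rw [inner_neg_left, hn]; push_cast; ring⟩

/-- The index of connection `f = [P∨ : Q∨]`. -/
noncomputable def indexOfConnection : ℕ :=
  RS.corootLattice.relIndex RS.coweightLattice

/-- The Weyl group `W`, generated by the reflections in the roots. -/
def weylGroup : Subgroup (V ≃ₗ[ℝ] V) :=
  Subgroup.closure {w : V ≃ₗ[ℝ] V | ∃ α ∈ RS.Δ, w = sRefl α}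

/-- The partial order `μ ≼ γ` on roots: `γ - μ` is a nonnegative integer combination of
the simple roots. -/
def rootLe (μ γ : V) : Prop :=
  ∃ c : Fin p → ℕ, γ = μ + ∑ i, (c i : ℝ) • RS.simpleRoot i

/-- An ideal of `Δ⁺`. -/
def IsIdeal (I : Set V) : Prop :=
  I ⊆ RS.pos ∧ ∀ γ ∈ I, ∀ μ ∈ RS.pos, γ + μ ∈ RS.Δ → γ + μ ∈ I

/-- An antichain in the poset `(Δ⁺, ≼)`. -/
def IsRootAntichain (Γ : Set V) : Prop :=
  Γ ⊆ RS.pos ∧ ∀ μ ∈ Γ, ∀ γ ∈ Γ, RS.rootLe μ γ → μ = γ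

/-- The set of minimal elements (generators, for an ideal) of a subset of `Δ⁺`. -/
def gens (I : Set V) : Set V := {γ ∈ I | ∀ μ ∈ I, RS.rootLe μ γ → μ = γ}

/-- The ideal `I⟨Γ⟩` generated by an antichain `Γ`. -/
def idealGen (Γ : Set V) : Set V := {μ ∈ RS.pos | ∃ γ ∈ Γ, RS.rootLe γ μ}

/-- The set `Ξ(I)` of maximal elements of `Δ⁺ \ I`. -/
def XiSet (I : Set V) : Set V :=
  {γ ∈ RS.pos \ I | ∀ μ ∈ RS.pos \ I, RS.rootLe γ μ → γ = μ}

/-- `k(μ, I)`: the minimal number of summands in an expression of `μ` as a sum of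
positive roots not in `I`. -/
noncomputable def kNum (I : Set V) (μ : V) : ℕ :=
  sInf {n : ℕ | ∃ f : Fin n → V, (∀ i, f i ∈ RS.pos \ I) ∧ μ = ∑ i, f i}

/-- A root is short if it is strictly shorter than the highest root `θ`. -/
def IsShort (α : V) : Prop := α ∈ RS.Δ ∧ ⟪α, α⟫ < ⟪RS.θ, RS.θ⟫

/-- The short positive roots `Δ⁺_s`. -/
def shortPos : Set V := {α ∈ RS.pos | ⟪α, α⟫ < ⟪RS.θ, RS.θ⟫}

/-- The long positive roots `Δ⁺_l`. -/
def longPos : Set V := {α ∈ RS.pos | ⟪α, α⟫ = ⟪RS.θ, RS.θ⟫}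

/-- `Δ` has roots of exactly two lengths, the squared length ratio (long over short)
being `ratio`. -/
def LengthRatio (ratio : ℝ) : Prop :=
  ∃ ls : ℝ, 0 < ls ∧ ls < ⟪RS.θ, RS.θ⟫ ∧
    (∀ α ∈ RS.Δ, ⟪α, α⟫ = ls ∨ ⟪α, α⟫ = ⟪RS.θ, RS.θ⟫) ∧
    (∃ α ∈ RS.Δ, ⟪α, α⟫ = ls) ∧ ⟪RS.θ, RS.θ⟫ = ratio * ls

/-- `Δ` has roots of two different lengths. -/
def TwoLengths : Prop := ∃ ratio : ℝ, RS.LengthRatio ratio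

/-- The simple roots `Π(Δ⁺_s)` of the root system `Δ_s` of short roots with respect to
the positive system `Δ⁺_s`: the short positive roots that are not sums of two short
positive roots. -/
def shortSimple : Set V :=
  {α ∈ RS.shortPos | ¬ ∃ β ∈ RS.shortPos, ∃ γ ∈ RS.shortPos, α = β + γ}

/-- The positive affine roots `Δ̂⁺`, an affine root `μ + kδ` being encoded as the pair
`(μ, k)`. -/
def affPos : Set (V × ℝ) :=
  {β : V × ℝ | β.1 ∈ RS.Δ ∧ (0 < β.2 ∨ (β.2 = 0 ∧ β.1 ∈ RS.pos))}

/-- A pair `(v, r)` with `v ∈ W`, `r ∈ Q∨` represents the element `w = v·t_r` of the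
affine Weyl group `Ŵ = W ⋉ Q∨`; it is dominant if `w(α) ∈ Δ̂⁺` for all `α ∈ Π`. -/
def IsDominantPair (v : V ≃ₗ[ℝ] V) (r : V) : Prop :=
  v ∈ RS.weylGroup ∧ r ∈ RS.corootLattice ∧
    ∀ i, affAct v r (RS.simpleRoot i, 0) ∈ RS.affPos

/-- `N(w) = {β ∈ Δ̂⁺ | w(β) ∈ -Δ̂⁺}` for `w = v·t_r`. -/
def Nset (v : V ≃ₗ[ℝ] V) (r : V) : Set (V × ℝ) :=
  {β : V × ℝ | β ∈ RS.affPos ∧ -(affAct v r β) ∈ RS.affPos}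

/-- The first layer ideal `I_w = {μ ∈ Δ⁺ | δ - μ ∈ N(w)}` of `w = v·t_r`. -/
def firstLayerIdeal (v : V ≃ₗ[ℝ] V) (r : V) : Set V :=
  {μ ∈ RS.pos | ((-μ, (1 : ℝ)) : V × ℝ) ∈ RS.Nset v r}

/-- `w = v·t_r` is minimal: dominant, and for every affine simple root `α ∈ Π̂`,
writing `w⁻¹(α) = kδ + μ`, one has `k ≥ -1`. -/
def IsMinimalPair (v : V ≃ₗ[ℝ] V) (r : V) : Prop :=
  RS.IsDominantPair v r ∧
    (∀ i, -1 ≤ (affActInv v r (RS.simpleRoot i, 0)).2) ∧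
    -1 ≤ (affActInv v r (-RS.θ, 1)).2

/-- `w = v·t_r` is maximal: dominant, and for every affine simple root `α ∈ Π̂`,
writing `w⁻¹(α) = kδ + μ`, one has `k ≤ 1`. -/
def IsMaximalPair (v : V ≃ₗ[ℝ] V) (r : V) : Prop :=
  RS.IsDominantPair v r ∧
    (∀ i, (affActInv v r (RS.simpleRoot i, 0)).2 ≤ 1) ∧
    (affActInv v r (-RS.θ, 1)).2 ≤ 1

/-- `w = v·t_r` is `s`-minimal: dominant, `k ≥ -1` for short simple `α`, and `k ≥ 0`
for `α ∈ Π̂_l = Π_l ∪ {α₀}`, where `w⁻¹(α) = kδ + μ`. -/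
def IsSMinimalPair (v : V ≃ₗ[ℝ] V) (r : V) : Prop :=
  RS.IsDominantPair v r ∧
    (∀ i, RS.IsShort (RS.simpleRoot i) →
      -1 ≤ (affActInv v r (RS.simpleRoot i, 0)).2) ∧
    (∀ i, ¬ RS.IsShort (RS.simpleRoot i) →
      0 ≤ (affActInv v r (RS.simpleRoot i, 0)).2) ∧
    0 ≤ (affActInv v r (-RS.θ, 1)).2

/-- `w = v·t_r` is `s`-maximal: dominant, `k ≤ 1` for short simple `α`, and `k ≤ 0`
for `α ∈ Π̂_l = Π_l ∪ {α₀}`, where `w⁻¹(α) = kδ + μ`. -/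
def IsSMaximalPair (v : V ≃ₗ[ℝ] V) (r : V) : Prop :=
  RS.IsDominantPair v r ∧
    (∀ i, RS.IsShort (RS.simpleRoot i) →
      (affActInv v r (RS.simpleRoot i, 0)).2 ≤ 1) ∧
    (∀ i, ¬ RS.IsShort (RS.simpleRoot i) →
      (affActInv v r (RS.simpleRoot i, 0)).2 ≤ 0) ∧
    (affActInv v r (-RS.θ, 1)).2 ≤ 0

/-- The open fundamental Weyl chamber `C`. -/
def chamber : Set V := {x : V | ∀ i, 0 < ⟪x, RS.simpleRoot i⟫}

/-- The open fundamental alcove `A`. -/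
def alcove : Set V := {x : V | (∀ i, 0 < ⟪x, RS.simpleRoot i⟫) ∧ ⟪x, RS.θ⟫ < 1}

/-- The affine arrangement of all hyperplanes `{x | (x,μ) = k}`, `μ ∈ Δ⁺`, `k ∈ ℤ`,
whose regions are the alcoves. -/
def affineArrangement : Set (V × ℝ) :=
  {h : V × ℝ | h.1 ∈ RS.pos ∧ ∃ k : ℤ, h.2 = (k : ℝ)}

/-- The dominant region `R_I` of the Catalan (equivalently, Shi) arrangement attached
to an ideal `I ⊆ Δ⁺` under the Shi bijection. -/
def regionOfIdeal (I : Set V) : Set V :=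
  {x ∈ RS.chamber | (∀ γ ∈ I, 1 < ⟪x, γ⟫) ∧ ∀ γ ∈ RS.pos \ I, ⟪x, γ⟫ < 1}

/-- The semi-Catalan arrangement `Cat_s(Δ)`. -/
def semiCatalan : Set (V × ℝ) :=
  {h : V × ℝ | h.1 ∈ RS.shortPos ∧ (h.2 = -1 ∨ h.2 = 0 ∨ h.2 = 1)} ∪
    {h : V × ℝ | h.1 ∈ RS.longPos ∧ h.2 = 0}

/-- The `m`-semi-Catalan arrangement `Cat_s^m(Δ)`. -/
def semiCatalanM (m : ℕ) : Set (V × ℝ) :=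
  {h : V × ℝ | h.1 ∈ RS.shortPos ∧ ∃ k : ℤ, |k| ≤ (m : ℤ) ∧ h.2 = (k : ℝ)} ∪
    {h : V × ℝ | h.1 ∈ RS.longPos ∧ h.2 = 0}

/-- The region `R_Γ^(s)` of the semi-Catalan arrangement attached to a short
antichain `Γ`. -/
def sRegion (Γ : Set V) : Set V :=
  {x ∈ RS.chamber | (∀ μ ∈ RS.idealGen Γ ∩ RS.shortPos, 1 < ⟪x, μ⟫) ∧
    ∀ μ ∈ RS.shortPos \ RS.idealGen Γ, ⟪x, μ⟫ < 1}

/-- `α` has height `n` (sum of the coefficients over the simple roots). -/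
def heightIs (α : V) (n : ℕ) : Prop :=
  ∃ c : Fin p → ℕ, α = ∑ i, (c i : ℝ) • RS.simpleRoot i ∧ ∑ i, c i = n

/-- `e` enumerates the exponents `e₁, …, e_p` of the Weyl group `W`, characterized by the
Shapiro–Kostant–Steinberg property: for every `k ≥ 1`, the number of positive roots of
height `k` equals the number of exponents that are `≥ k`. -/
def IsExponents (e : Fin p → ℕ) : Prop :=
  ∀ k : ℕ, 1 ≤ k →
    {α ∈ RS.pos | RS.heightIs α k}.ncard = {i : Fin p | k ≤ e i}.ncard

/-- `h` is the Coxeter number of `W`, characterized by `#Δ = p·h`. -/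
def IsCoxeterNumber (h : ℕ) : Prop := RS.Δ.ncard = p * h

open Classical in
/-- `g` is the sum of the coefficients of the short simple roots in the expression
`θ = Σ cᵢ αᵢ` of the highest root. -/
def IsShortCoeffSum (g : ℕ) : Prop :=
  ∃ c : Fin p → ℕ, RS.θ = ∑ i, (c i : ℝ) • RS.simpleRoot i ∧
    (∑ i, if RS.IsShort (RS.simpleRoot i) then c i else 0) = g

open Classical in
/-- The number of constraints of the simplex
`D_max = {x | (x,αᵢ) ≤ 1 ∀i, (x,θ) ≥ 0}` that are active (hold with equality) at `x`;
for `x ∈ D_max` this is the codimension of the face of `D_max` containing `x`. -/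
noncomputable def dmaxFaceCodim (x : V) : ℕ :=
  {i : Fin p | ⟪x, RS.simpleRoot i⟫ = 1}.ncard + (if ⟪x, RS.θ⟫ = 0 then 1 else 0)

end RootSystemData

/-!
For `w = v·t_r` with `v ∈ W`, the `δ`-coefficient of `w⁻¹(α)` is `(v⁻¹α, r) = (α, v r)`, so the
`s`-minimality inequalities say exactly that `x = v r` lies in `D^(s)_min`, and `x ∈ Q∨` because
`W` preserves `Q∨`. Dominance of `w` says that `v` maps the simple roots into the positive system
`Δ_x = {γ | (γ, x) < 0} ∪ {γ ∈ Δ⁺ | (γ, x) = 0}`. Since `W` acts simply transitively on positive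
systems, each `x` has exactly one such `v`, and then `r = v⁻¹ x`. Transitivity is the usual descent,
multiplying `v` by simple reflections to shrink `{β ∈ Δ⁺ | v β ∉ Δ_x}`; freeness comes from the
exchange condition, once `W` is known to be generated by the simple reflections.
-/

lemma sRefl_apply (α x : V) : sRefl α x = x - (2 * ⟪α, x⟫ / ⟪α, α⟫) • α := rfl

lemma sRefl_sRefl (α x : V) : sRefl α (sRefl α x) = x := reflFun_involutive α x

lemma sRefl_inv (α : V) : (sRefl α)⁻¹ = sRefl α :=
  inv_eq_of_mul_eq_one_right (LinearEquiv.ext (sRefl_sRefl α))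

lemma sRefl_self {α : V} (h : α ≠ 0) : sRefl α α = -α := by
  have hα : ⟪α, α⟫ ≠ 0 := inner_self_ne_zero.mpr h
  rw [sRefl_apply, mul_div_assoc, div_self hα]
  module

lemma sRefl_neg (α : V) : sRefl (-α) = sRefl α := by
  ext x
  simp only [sRefl_apply, inner_neg_left, inner_neg_right, neg_neg, smul_neg, mul_neg, neg_div,
    neg_smul]

lemma inner_sRefl_sRefl (α x y : V) : ⟪sRefl α x, sRefl α y⟫ = ⟪x, y⟫ := by
  rcases eq_or_ne α 0 with rfl | h
  · simp [sRefl_apply]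
  · have hα : ⟪α, α⟫ ≠ 0 := inner_self_ne_zero.mpr h
    simp only [sRefl_apply, inner_sub_left, inner_sub_right, real_inner_smul_left,
      real_inner_smul_right, real_inner_comm α x]
    field_simp
    ring

lemma conj_sRefl {u : V ≃ₗ[ℝ] V} (hu : ∀ x y, ⟪u x, u y⟫ = ⟪x, y⟫) (α : V) :
    u * sRefl α * u⁻¹ = sRefl (u α) := by
  ext x
  have hx : ⟪α, u.symm x⟫ = ⟪u α, x⟫ := by rw [← hu, LinearEquiv.apply_symm_apply]
  simp only [LinearEquiv.mul_apply, LinearEquiv.coe_inv, sRefl_apply, map_sub, map_smul,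
    LinearEquiv.apply_symm_apply, hx, hu]

namespace RootSystemData

variable {p : ℕ} (RS : RootSystemData V p)

def rootIsometries : Subgroup (V ≃ₗ[ℝ] V) where
  carrier := {v | (∀ x y, ⟪v x, v y⟫ = ⟪x, y⟫) ∧ ∀ β, v β ∈ RS.Δ ↔ β ∈ RS.Δ}
  one_mem' := ⟨fun _ _ => rfl, fun _ => Iff.rfl⟩
  mul_mem' := fun ⟨hv, hvΔ⟩ ⟨hw, hwΔ⟩ =>
    ⟨fun x y => (hv _ _).trans (hw x y), fun β => (hvΔ _).trans (hwΔ β)⟩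
  inv_mem' := fun {v} ⟨hv, hvΔ⟩ =>
    ⟨fun x y => by simpa using (hv (v.symm x) (v.symm y)).symm,
      fun β => by simpa using (hvΔ (v.symm β)).symm⟩

lemma sRefl_mem_rootIsometries {α : V} (hα : α ∈ RS.Δ) : sRefl α ∈ RS.rootIsometries :=
  ⟨inner_sRefl_sRefl α, fun β =>
    ⟨fun h => sRefl_sRefl α β ▸ RS.reflect_mem α hα _ h, RS.reflect_mem α hα β⟩⟩

lemma weylGroup_le_rootIsometries : RS.weylGroup ≤ RS.rootIsometries :=
  Subgroup.closure_le _ |>.mpr <| by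
    rintro _ ⟨α, hα, rfl⟩
    exact RS.sRefl_mem_rootIsometries hα

lemma corootLattice_le_comap {v : V ≃ₗ[ℝ] V} (hv : v ∈ RS.rootIsometries) :
    RS.corootLattice ≤ RS.corootLattice.comap v.toLinearMap.toAddMonoidHom := by
  refine (AddSubgroup.closure_le _).mpr ?_
  rintro _ ⟨β, hβ, rfl⟩
  change v (corootVec β) ∈ RS.corootLattice
  rw [corootVec, map_smul, ← hv.1 β β]
  exact AddSubgroup.subset_closure ⟨v β, (hv.2 β).mpr hβ, rfl⟩

section

variable {RS} {v : V ≃ₗ[ℝ] V}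

lemma inner_map_map_of_mem_weylGroup (hv : v ∈ RS.weylGroup) (x y : V) :
    ⟪v x, v y⟫ = ⟪x, y⟫ :=
  (RS.weylGroup_le_rootIsometries hv).1 x y

lemma inner_symm_apply_of_mem_weylGroup (hv : v ∈ RS.weylGroup) (x y : V) :
    ⟪v.symm x, y⟫ = ⟪x, v y⟫ := by
  rw [← inner_map_map_of_mem_weylGroup hv, LinearEquiv.apply_symm_apply]

lemma map_mem_roots_of_mem_weylGroup (hv : v ∈ RS.weylGroup) {β : V} (hβ : β ∈ RS.Δ) :
    v β ∈ RS.Δ :=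
  ((RS.weylGroup_le_rootIsometries hv).2 β).mpr hβ

variable (RS) in
lemma map_mem_corootLattice_of_mem_weylGroup (hv : v ∈ RS.weylGroup) {x : V}
    (hx : x ∈ RS.corootLattice) : v x ∈ RS.corootLattice :=
  RS.corootLattice_le_comap (RS.weylGroup_le_rootIsometries hv) hx

end

lemma pos_subset_roots : RS.pos ⊆ RS.Δ := by
  rw [RS.pos_def]
  exact fun _ hβ => hβ.1

lemma exists_natCoeffs_of_mem_pos {β : V} (hβ : β ∈ RS.pos) :
    ∃ c : Fin p → ℕ, β = ∑ i, (c i : ℝ) • RS.simpleRoot i := by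
  rw [RS.pos_def] at hβ
  exact hβ.2

lemma top_le_span_simpleRoot : ⊤ ≤ Submodule.span ℝ (Set.range RS.simpleRoot) := by
  have hpos : ∀ β ∈ RS.pos, β ∈ Submodule.span ℝ (Set.range RS.simpleRoot) := fun β hβ => by
    obtain ⟨c, rfl⟩ := RS.exists_natCoeffs_of_mem_pos hβ
    exact Submodule.sum_mem _ fun i _ => Submodule.smul_mem _ _ (Submodule.subset_span ⟨i, rfl⟩)
  rw [← RS.span_eq_top, Submodule.span_le]
  intro β hβ
  rcases RS.pos_or_neg β hβ with h | h
  · exact hpos β h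
  · simpa using Submodule.neg_mem _ (hpos _ h)

def simpleBasis : Basis (Fin p) ℝ V := Basis.mk RS.simpleRoot_indep RS.top_le_span_simpleRoot

@[simp]
lemma simpleBasis_apply (i : Fin p) : RS.simpleBasis i = RS.simpleRoot i :=
  Basis.mk_apply _ _ i

lemma repr_nonneg_of_mem_pos {β : V} (hβ : β ∈ RS.pos) (i : Fin p) :
    0 ≤ RS.simpleBasis.repr β i := by
  obtain ⟨c, rfl⟩ := RS.exists_natCoeffs_of_mem_pos hβ
  simp_rw [← RS.simpleBasis_apply, Basis.repr_sum_self]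
  positivity

lemma mem_pos_of_repr_pos {β : V} (hβ : β ∈ RS.Δ) {i : Fin p}
    (hi : 0 < RS.simpleBasis.repr β i) : β ∈ RS.pos := by
  refine (RS.pos_or_neg β hβ).resolve_right fun hneg => ?_
  have := RS.repr_nonneg_of_mem_pos hneg i
  rw [map_neg, Finsupp.neg_apply] at this
  linarith

lemma repr_ne_zero_of_mem_roots {β : V} (hβ : β ∈ RS.Δ) : RS.simpleBasis.repr β ≠ 0 := by
  simpa using ne_of_mem_of_not_mem hβ RS.zero_notMem

lemma mem_pos_iff_repr_nonneg {β : V} (hβ : β ∈ RS.Δ) :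
    β ∈ RS.pos ↔ ∀ i, 0 ≤ RS.simpleBasis.repr β i := by
  refine ⟨RS.repr_nonneg_of_mem_pos, fun h => ?_⟩
  obtain ⟨i, hi⟩ := Finsupp.ne_iff.mp (RS.repr_ne_zero_of_mem_roots hβ)
  exact RS.mem_pos_of_repr_pos hβ ((h i).lt_of_ne (Ne.symm hi))

lemma neg_notMem_pos {β : V} (hβ : β ∈ RS.pos) : -β ∉ RS.pos := fun hneg => by
  obtain ⟨i, hi⟩ := Finsupp.ne_iff.mp (RS.repr_ne_zero_of_mem_roots (RS.pos_subset_roots hβ))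
  have h1 := RS.repr_nonneg_of_mem_pos hβ i
  have h2 := RS.repr_nonneg_of_mem_pos hneg i
  rw [map_neg, Finsupp.neg_apply] at h2
  exact hi (by simp only [Finsupp.coe_zero, Pi.zero_apply]; linarith)

lemma neg_mem_pos_of_notMem {β : V} (hβ : β ∈ RS.Δ) (h : β ∉ RS.pos) : -β ∈ RS.pos :=
  (RS.pos_or_neg β hβ).resolve_left h

lemma simpleRoot_ne_zero (i : Fin p) : RS.simpleRoot i ≠ 0 :=
  ne_of_mem_of_not_mem (RS.simpleRoot_mem i) RS.zero_notMem

lemma simpleRoot_mem_pos (i : Fin p) : RS.simpleRoot i ∈ RS.pos :=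
  RS.mem_pos_of_repr_pos (RS.simpleRoot_mem i) (i := i) <| by
    rw [← RS.simpleBasis_apply, Basis.repr_self, Finsupp.single_eq_same]
    exact one_pos

def simpleRefl (i : Fin p) : V ≃ₗ[ℝ] V := sRefl (RS.simpleRoot i)

lemma simpleRefl_apply (i : Fin p) (x : V) : RS.simpleRefl i x =
    x - (2 * ⟪RS.simpleRoot i, x⟫ / ⟪RS.simpleRoot i, RS.simpleRoot i⟫) • RS.simpleRoot i :=
  rfl

@[simp]
lemma simpleRefl_inv (i : Fin p) : (RS.simpleRefl i)⁻¹ = RS.simpleRefl i := sRefl_inv _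

@[simp]
lemma simpleRefl_mul_self (i : Fin p) : RS.simpleRefl i * RS.simpleRefl i = 1 := by
  simpa using mul_inv_cancel (RS.simpleRefl i)

lemma simpleRefl_mem_weylGroup (i : Fin p) : RS.simpleRefl i ∈ RS.weylGroup :=
  Subgroup.subset_closure ⟨_, RS.simpleRoot_mem i, rfl⟩

lemma simpleRefl_mem_pos {β : V} (hβ : β ∈ RS.pos) {i : Fin p} (hne : β ≠ RS.simpleRoot i) :
    RS.simpleRefl i β ∈ RS.pos := by
  have hβΔ := RS.pos_subset_roots hβ
  obtain ⟨j, hji, hj⟩ : ∃ j ≠ i, 0 < RS.simpleBasis.repr β j := by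
    by_contra! h
    have hβi : β = RS.simpleBasis.repr β i • RS.simpleRoot i := by
      conv_lhs => rw [← RS.simpleBasis.sum_repr β]
      refine (Finset.sum_eq_single i (fun j _ hj => ?_) (by simp)).trans (by simp)
      rw [le_antisymm (h j hj) (RS.repr_nonneg_of_mem_pos hβ j), zero_smul]
    rcases RS.reduced _ (RS.simpleRoot_mem i) _ (hβi ▸ hβΔ) with h1 | h1
    · exact hne (by rw [hβi, h1, one_smul])
    · rw [hβi, h1, neg_one_smul] at hβ
      exact RS.neg_notMem_pos (RS.simpleRoot_mem_pos i) hβ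
  refine RS.mem_pos_of_repr_pos (RS.reflect_mem _ (RS.simpleRoot_mem i) β hβΔ) (i := j) ?_
  rwa [simpleRefl_apply, map_sub, map_smul, ← simpleBasis_apply, Basis.repr_self,
    Finsupp.sub_apply, Finsupp.smul_apply, Finsupp.single_eq_of_ne hji, smul_zero, sub_zero]

def height : V →ₗ[ℝ] ℝ := ∑ i, RS.simpleBasis.coord i

lemma height_simpleRoot (i : Fin p) : RS.height (RS.simpleRoot i) = 1 := by
  rw [height, ← simpleBasis_apply, LinearMap.sum_apply]
  simp only [Basis.coord_apply, Basis.repr_self, Finsupp.single_apply]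
  simp

lemma exists_height_eq_natCast {β : V} (hβ : β ∈ RS.pos) : ∃ n : ℕ, RS.height β = n := by
  obtain ⟨c, rfl⟩ := RS.exists_natCoeffs_of_mem_pos hβ
  exact ⟨∑ i, c i, by simp [height_simpleRoot]⟩

lemma height_simpleRefl (i : Fin p) (β : V) : RS.height (RS.simpleRefl i β) =
    RS.height β - 2 * ⟪RS.simpleRoot i, β⟫ / ⟪RS.simpleRoot i, RS.simpleRoot i⟫ := by
  rw [simpleRefl_apply, map_sub, map_smul, height_simpleRoot, smul_eq_mul, mul_one]

lemma exists_inner_simpleRoot_pos {β : V} (hβ : β ∈ RS.pos) :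
    ∃ i, 0 < ⟪RS.simpleRoot i, β⟫ := by
  by_contra! h
  have hself : ⟪β, β⟫ ≤ 0 := by
    nth_rw 1 [← RS.simpleBasis.sum_repr β]
    rw [sum_inner]
    refine Finset.sum_nonpos fun i _ => ?_
    rw [real_inner_smul_left, simpleBasis_apply]
    exact mul_nonpos_of_nonneg_of_nonpos (RS.repr_nonneg_of_mem_pos hβ i) (h i)
  exact (real_inner_self_pos.mpr (ne_of_mem_of_not_mem (RS.pos_subset_roots hβ)
    RS.zero_notMem)).not_ge hself

lemma sRefl_mem_closure_simpleRefl_of_mem_pos {β : V} (hβ : β ∈ RS.pos) :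
    sRefl β ∈ Subgroup.closure (Set.range RS.simpleRefl) := by
  obtain ⟨n, hn⟩ := RS.exists_height_eq_natCast hβ
  induction n using Nat.strong_induction_on generalizing β with
  | _ n ih =>
  obtain ⟨i, hi⟩ := RS.exists_inner_simpleRoot_pos hβ
  have hs : RS.simpleRefl i ∈ Subgroup.closure (Set.range RS.simpleRefl) :=
    Subgroup.subset_closure ⟨i, rfl⟩
  by_cases hβi : β = RS.simpleRoot i
  · rwa [hβi]
  have hγ := RS.simpleRefl_mem_pos hβ hβi
  obtain ⟨m, hm⟩ := RS.exists_height_eq_natCast hγ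
  have hmn : m < n := by
    have hk : 0 < 2 * ⟪RS.simpleRoot i, β⟫ / ⟪RS.simpleRoot i, RS.simpleRoot i⟫ :=
      div_pos (by linarith) (real_inner_self_pos.mpr (RS.simpleRoot_ne_zero i))
    have := RS.height_simpleRefl i β
    exact_mod_cast (show (m : ℝ) < n by linarith)
  -- `s_β = s_i s_γ s_i` with `γ = s_i β` of smaller height
  have hconj : RS.simpleRefl i * sRefl (RS.simpleRefl i β) * (RS.simpleRefl i)⁻¹ = sRefl β := by
    simp only [simpleRefl]
    rw [conj_sRefl (inner_sRefl_sRefl _), sRefl_sRefl]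
  rw [← hconj]
  exact mul_mem (mul_mem hs (ih m hmn hγ hm)) (inv_mem hs)

lemma weylGroup_le_closure_simpleRefl :
    RS.weylGroup ≤ Subgroup.closure (Set.range RS.simpleRefl) := by
  refine (Subgroup.closure_le _).mpr ?_
  rintro _ ⟨β, hβ, rfl⟩
  rcases RS.pos_or_neg β hβ with h | h
  · exact RS.sRefl_mem_closure_simpleRefl_of_mem_pos h
  · rw [← sRefl_neg]
    exact RS.sRefl_mem_closure_simpleRefl_of_mem_pos h

lemma list_prod_mem_weylGroup (l : List (Fin p)) : (l.map RS.simpleRefl).prod ∈ RS.weylGroup :=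
  Subgroup.list_prod_mem _ fun _ hx => by
    obtain ⟨i, -, rfl⟩ := List.mem_map.mp hx
    exact RS.simpleRefl_mem_weylGroup i

lemma exists_list_prod_eq_of_mem_weylGroup {u : V ≃ₗ[ℝ] V} (hu : u ∈ RS.weylGroup) :
    ∃ l : List (Fin p), (l.map RS.simpleRefl).prod = u := by
  have hu' := RS.weylGroup_le_closure_simpleRefl hu
  clear hu
  induction hu' using Subgroup.closure_induction with
  | mem w hw =>
    obtain ⟨i, rfl⟩ := hw
    exact ⟨[i], by simp⟩
  | one => exact ⟨[], rfl⟩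
  | mul g h _ _ ihg ihh =>
    obtain ⟨l₁, rfl⟩ := ihg
    obtain ⟨l₂, rfl⟩ := ihh
    exact ⟨l₁ ++ l₂, by simp⟩
  | inv g _ ih =>
    obtain ⟨l, rfl⟩ := ih
    exact ⟨l.reverse, by simp [List.prod_inv_reverse, Function.comp_def]⟩

lemma exists_shorter_list_of_notMem_pos : ∀ (l : List (Fin p)) (j : Fin p),
    (l.map RS.simpleRefl).prod (RS.simpleRoot j) ∉ RS.pos →
      ∃ l' : List (Fin p), l'.length + 1 = l.length ∧
        (l.map RS.simpleRefl).prod * RS.simpleRefl j = (l'.map RS.simpleRefl).prod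
  | [], j, h => absurd (RS.simpleRoot_mem_pos j) (by simpa using h)
  | i :: l, j, h => by
    set u := (l.map RS.simpleRefl).prod
    by_cases hγ : u (RS.simpleRoot j) ∈ RS.pos
    · have hγi : u (RS.simpleRoot j) = RS.simpleRoot i := by
        by_contra hne
        exact h (by simpa [u] using RS.simpleRefl_mem_pos hγ hne)
      have hconj : u * RS.simpleRefl j * u⁻¹ = RS.simpleRefl i :=
        (conj_sRefl (inner_map_map_of_mem_weylGroup (RS.list_prod_mem_weylGroup l)) _).trans
          (congrArg sRefl hγi)
      refine ⟨l, rfl, ?_⟩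
      simp only [List.map_cons, List.prod_cons]
      rw [← hconj]
      simp [u, mul_assoc]
    · obtain ⟨l', hlen, heq⟩ := exists_shorter_list_of_notMem_pos l j hγ
      exact ⟨i :: l', by simp [hlen], by simp [mul_assoc, ← heq]⟩

lemma eq_one_of_mapsTo_pos {u : V ≃ₗ[ℝ] V} (hu : u ∈ RS.weylGroup)
    (h : ∀ β ∈ RS.pos, u β ∈ RS.pos) : u = 1 := by
  obtain ⟨l, rfl⟩ := RS.exists_list_prod_eq_of_mem_weylGroup hu
  induction hl : l.length using Nat.strong_induction_on generalizing l with
  | _ n ih =>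
  rcases List.eq_nil_or_concat l with rfl | ⟨l₀, j, rfl⟩
  · rfl
  rw [List.concat_eq_append] at h hl ⊢
  have hprod : ((l₀ ++ [j]).map RS.simpleRefl).prod =
      (l₀.map RS.simpleRefl).prod * RS.simpleRefl j := by
    simp
  have hnot : (l₀.map RS.simpleRefl).prod (RS.simpleRoot j) ∉ RS.pos := fun hmem =>
    RS.neg_notMem_pos hmem <| by
      simpa [hprod, simpleRefl, sRefl_self (RS.simpleRoot_ne_zero j)] using
        h _ (RS.simpleRoot_mem_pos j)
  obtain ⟨l', hlen, heq⟩ := RS.exists_shorter_list_of_notMem_pos l₀ j hnot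
  rw [hprod, heq] at h ⊢
  exact ih l'.length (by simp at hl; omega) l' (RS.list_prod_mem_weylGroup l') h rfl

def posSystemAt (x : V) : Set V :=
  {γ ∈ RS.Δ | ⟪γ, x⟫ < 0 ∨ (⟪γ, x⟫ = 0 ∧ γ ∈ RS.pos)}

lemma neg_mem_posSystemAt {x β : V} (hβ : β ∈ RS.Δ) (h : β ∉ RS.posSystemAt x) :
    -β ∈ RS.posSystemAt x := by
  refine ⟨RS.neg_mem β hβ, ?_⟩
  rw [inner_neg_left, neg_lt_zero, neg_eq_zero]
  rcases lt_trichotomy ⟪β, x⟫ 0 with hlt | heq | hgt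
  · exact absurd ⟨hβ, Or.inl hlt⟩ h
  · exact Or.inr ⟨heq, RS.neg_mem_pos_of_notMem hβ fun hp => h ⟨hβ, Or.inr ⟨heq, hp⟩⟩⟩
  · exact Or.inl hgt

section

variable {RS}

lemma neg_notMem_posSystemAt {x β : V} (h : β ∈ RS.posSystemAt x) :
    -β ∉ RS.posSystemAt x := by
  rintro ⟨-, hneg⟩
  rw [inner_neg_left, neg_lt_zero, neg_eq_zero] at hneg
  rcases h with ⟨-, h | ⟨h0, hpos⟩⟩ <;> rcases hneg with h' | ⟨h0', hpos'⟩
  · linarith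
  · linarith
  · linarith
  · exact RS.neg_notMem_pos hpos hpos'

lemma ncard_setOf_mul_simpleRefl_lt {D : Set V} (hD : ∀ β ∈ RS.Δ, β ∉ D → -β ∈ D)
    {v : V ≃ₗ[ℝ] V} (hv : v ∈ RS.weylGroup) {i : Fin p} (hi : v (RS.simpleRoot i) ∉ D) :
    {β ∈ RS.pos | (v * RS.simpleRefl i) β ∉ D}.ncard < {β ∈ RS.pos | v β ∉ D}.ncard := by
  have hfin : {β ∈ RS.pos | v β ∉ D}.Finite :=
    RS.finite.subset fun β hβ => RS.pos_subset_roots hβ.1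
  have hsub : {β ∈ RS.pos | (v * RS.simpleRefl i) β ∉ D} ⊆
      RS.simpleRefl i '' ({β ∈ RS.pos | v β ∉ D} \ {RS.simpleRoot i}) := by
    rintro β ⟨hβ, hβD⟩
    have hβi : β ≠ RS.simpleRoot i := by
      rintro rfl
      refine hβD ?_
      simpa [simpleRefl, sRefl_self (RS.simpleRoot_ne_zero i)] using
        hD _ (map_mem_roots_of_mem_weylGroup hv (RS.simpleRoot_mem i)) hi
    refine ⟨RS.simpleRefl i β, ⟨⟨RS.simpleRefl_mem_pos hβ hβi, hβD⟩, fun h => ?_⟩,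
      sRefl_sRefl _ _⟩
    have hβneg : β = -RS.simpleRoot i := by
      simpa [simpleRefl, sRefl_sRefl, sRefl_self (RS.simpleRoot_ne_zero i)] using
        congrArg (RS.simpleRefl i) (Set.mem_singleton_iff.mp h)
    exact RS.neg_notMem_pos (RS.simpleRoot_mem_pos i) (hβneg ▸ hβ)
  calc _ ≤ (RS.simpleRefl i '' ({β ∈ RS.pos | v β ∉ D} \ {RS.simpleRoot i})).ncard :=
        Set.ncard_le_ncard hsub (hfin.sdiff.image _)
    _ = ({β ∈ RS.pos | v β ∉ D} \ {RS.simpleRoot i}).ncard :=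
        Set.ncard_image_of_injective _ (RS.simpleRefl i).injective
    _ < _ := Set.ncard_sdiff_singleton_lt_of_mem ⟨RS.simpleRoot_mem_pos i, hi⟩ hfin

variable (RS) in
lemma exists_mem_weylGroup_forall_simpleRoot_mem {D : Set V}
    (hD : ∀ β ∈ RS.Δ, β ∉ D → -β ∈ D) :
    ∃ v ∈ RS.weylGroup, ∀ i, v (RS.simpleRoot i) ∈ D := by
  suffices h : ∀ n, ∀ v ∈ RS.weylGroup, {β ∈ RS.pos | v β ∉ D}.ncard = n →
      ∃ v ∈ RS.weylGroup, ∀ i, v (RS.simpleRoot i) ∈ D from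
    h _ 1 (one_mem _) rfl
  intro n
  induction n using Nat.strong_induction_on with
  | _ n ih =>
  intro v hv hn
  by_cases hall : ∀ i, v (RS.simpleRoot i) ∈ D
  · exact ⟨v, hv, hall⟩
  obtain ⟨i, hi⟩ := not_forall.mp hall
  exact ih _ (hn ▸ ncard_setOf_mul_simpleRefl_lt hD hv hi) _
    (mul_mem hv (RS.simpleRefl_mem_weylGroup i)) rfl

lemma map_mem_posSystemAt_of_mem_pos {x : V} {v : V ≃ₗ[ℝ] V} (hv : v ∈ RS.weylGroup)
    (h : ∀ i, v (RS.simpleRoot i) ∈ RS.posSystemAt x) {β : V} (hβ : β ∈ RS.pos) :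
    v β ∈ RS.posSystemAt x := by
  set c := RS.simpleBasis.repr β
  have hc : ∀ i, 0 ≤ c i := RS.repr_nonneg_of_mem_pos hβ
  have hvβ : v β = ∑ i, c i • v (RS.simpleRoot i) := by
    conv_lhs => rw [← RS.simpleBasis.sum_repr β]
    simp [c]
  have hterm : ∀ i, c i * ⟪v (RS.simpleRoot i), x⟫ ≤ 0 := fun i =>
    mul_nonpos_of_nonneg_of_nonpos (hc i) <| by rcases (h i).2 with h' | ⟨h', -⟩ <;> linarith
  have hinner : ⟪v β, x⟫ = ∑ i, c i * ⟪v (RS.simpleRoot i), x⟫ := by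
    simp [hvβ, sum_inner, real_inner_smul_left]
  have hΔ := map_mem_roots_of_mem_weylGroup hv (RS.pos_subset_roots hβ)
  rcases (hinner ▸ Finset.sum_nonpos fun i _ => hterm i : ⟪v β, x⟫ ≤ 0).lt_or_eq with hlt | heq
  · exact ⟨hΔ, Or.inl hlt⟩
  -- if `(v β, x) = 0`, only roots `v αᵢ` orthogonal to `x`, hence positive, occur in `v β`
  have hzero := (Finset.sum_eq_zero_iff_of_nonpos fun i _ => hterm i).mp (hinner ▸ heq)
  have hpos : ∀ i, c i ≠ 0 → v (RS.simpleRoot i) ∈ RS.pos := fun i hi => by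
    rcases (h i).2 with h' | ⟨-, h'⟩
    · exact absurd (hzero i (Finset.mem_univ i)) (mul_ne_zero hi h'.ne)
    · exact h'
  refine ⟨hΔ, Or.inr ⟨heq, (RS.mem_pos_iff_repr_nonneg hΔ).mpr fun j => ?_⟩⟩
  rw [hvβ, map_sum, Finsupp.finsetSum_apply]
  refine Finset.sum_nonneg fun i _ => ?_
  rcases eq_or_ne (c i) 0 with h0 | h0
  · simp [h0]
  · rw [map_smul, Finsupp.smul_apply, smul_eq_mul]
    exact mul_nonneg (hc i) (RS.repr_nonneg_of_mem_pos (hpos i h0) j)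

variable (RS) in
lemma eq_of_forall_simpleRoot_mem_posSystemAt {x : V} {v v' : V ≃ₗ[ℝ] V}
    (hv : v ∈ RS.weylGroup) (hv' : v' ∈ RS.weylGroup)
    (h : ∀ i, v (RS.simpleRoot i) ∈ RS.posSystemAt x)
    (h' : ∀ i, v' (RS.simpleRoot i) ∈ RS.posSystemAt x) : v = v' := by
  have hu : v'⁻¹ * v ∈ RS.weylGroup := mul_mem (inv_mem hv') hv
  have hu1 : v'⁻¹ * v = 1 := RS.eq_one_of_mapsTo_pos hu fun β hβ => by
    by_contra hneg
    have hmem := map_mem_posSystemAt_of_mem_pos hv' h' <| RS.neg_mem_pos_of_notMem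
      (map_mem_roots_of_mem_weylGroup hu (RS.pos_subset_roots hβ)) hneg
    rw [map_neg, LinearEquiv.mul_apply, LinearEquiv.coe_inv,
      LinearEquiv.apply_symm_apply] at hmem
    exact neg_notMem_posSystemAt (map_mem_posSystemAt_of_mem_pos hv h hβ) hmem
  exact (inv_mul_eq_one.mp hu1).symm

end

/-- The polytope `D^(s)_min`. -/
def sMinDomain : Set V :=
  {x : V | (∀ i, RS.IsShort (RS.simpleRoot i) → -1 ≤ ⟪x, RS.simpleRoot i⟫) ∧
    (∀ i, ¬ RS.IsShort (RS.simpleRoot i) → 0 ≤ ⟪x, RS.simpleRoot i⟫) ∧ ⟪x, RS.θ⟫ ≤ 1}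

lemma isDominantPair_iff {v : V ≃ₗ[ℝ] V} {r : V} :
    RS.IsDominantPair v r ↔ v ∈ RS.weylGroup ∧ r ∈ RS.corootLattice ∧
      ∀ i, v (RS.simpleRoot i) ∈ RS.posSystemAt (v r) := by
  refine and_congr_right fun hv => and_congr_right fun _ => forall_congr' fun i => ?_
  simp only [affAct, affPos, posSystemAt, Set.mem_ofPred_eq, zero_sub, neg_pos, neg_eq_zero,
    ← inner_map_map_of_mem_weylGroup hv (RS.simpleRoot i) r]

lemma affActInv_snd {v : V ≃ₗ[ℝ] V} (hv : v ∈ RS.weylGroup) (r : V) (β : V × ℝ) :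
    (affActInv v r β).2 = β.2 + ⟪v r, β.1⟫ := by
  rw [affActInv, inner_symm_apply_of_mem_weylGroup hv, real_inner_comm]

lemma isSMinimalPair_iff (v : V ≃ₗ[ℝ] V) (r : V) :
    RS.IsSMinimalPair v r ↔
      RS.IsDominantPair v r ∧ v r ∈ RS.sMinDomain ∩ (RS.corootLattice : Set V) := by
  constructor
  · rintro ⟨hdom, hs, hl, hθ⟩
    simp only [RS.affActInv_snd hdom.1, zero_add, inner_neg_right] at hs hl hθ
    exact ⟨hdom, ⟨hs, hl, by linarith⟩,
      RS.map_mem_corootLattice_of_mem_weylGroup hdom.1 hdom.2.1⟩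
  · rintro ⟨hdom, ⟨hs, hl, hθ⟩, -⟩
    refine ⟨hdom, ?_⟩
    simp only [RS.affActInv_snd hdom.1, zero_add, inner_neg_right]
    exact ⟨hs, hl, by linarith⟩

end RootSystemData

theorem statement7_general {V : Type*} [NormedAddCommGroup V] [InnerProductSpace ℝ V] {p : ℕ}
    (RS : RootSystemData V p) :
    (∀ (v : V ≃ₗ[ℝ] V) (r : V),
      RS.IsSMinimalPair v r ↔ RS.IsDominantPair v r ∧
        v r ∈ {x : V | (∀ i, RS.IsShort (RS.simpleRoot i) → -1 ≤ ⟪x, RS.simpleRoot i⟫) ∧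
            (∀ i, ¬ RS.IsShort (RS.simpleRoot i) → 0 ≤ ⟪x, RS.simpleRoot i⟫) ∧
            ⟪x, RS.θ⟫ ≤ 1} ∩ (RS.corootLattice : Set V)) ∧
    Set.BijOn (fun vr : (V ≃ₗ[ℝ] V) × V => vr.1 vr.2)
      {vr : (V ≃ₗ[ℝ] V) × V | RS.IsSMinimalPair vr.1 vr.2}
      ({x : V | (∀ i, RS.IsShort (RS.simpleRoot i) → -1 ≤ ⟪x, RS.simpleRoot i⟫) ∧
          (∀ i, ¬ RS.IsShort (RS.simpleRoot i) → 0 ≤ ⟪x, RS.simpleRoot i⟫) ∧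
          ⟪x, RS.θ⟫ ≤ 1} ∩ (RS.corootLattice : Set V)) := by
  refine ⟨RS.isSMinimalPair_iff, fun vr h => ((RS.isSMinimalPair_iff _ _).mp h).2, ?_, ?_⟩
  · rintro ⟨v, r⟩ h ⟨v', r'⟩ h' (hx : v r = v' r')
    obtain ⟨hv, -, hD⟩ := RS.isDominantPair_iff.mp h.1
    obtain ⟨hv', -, hD'⟩ := RS.isDominantPair_iff.mp h'.1
    obtain rfl : v = v' :=
      RS.eq_of_forall_simpleRoot_mem_posSystemAt hv hv' hD (hx ▸ hD')
    obtain rfl : r = r' := v.injective hx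
    rfl
  · rintro x ⟨hx, hxQ⟩
    obtain ⟨v, hv, hD⟩ := RS.exists_mem_weylGroup_forall_simpleRoot_mem
      fun _ => RS.neg_mem_posSystemAt (x := x)
    have hvx : v (v.symm x) = x := v.apply_symm_apply x
    have hdom : RS.IsDominantPair v (v.symm x) := (RS.isDominantPair_iff).mpr
      ⟨hv, RS.map_mem_corootLattice_of_mem_weylGroup (inv_mem hv) hxQ, by rwa [hvx]⟩
    exact ⟨(v, v.symm x), (RS.isSMinimalPair_iff _ _).mpr ⟨hdom, by rw [hvx]; exact ⟨hx, hxQ⟩⟩, hvx⟩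

/-- Let
`D^(s)_min = {x : (x,α) ≥ −1 for α ∈ Π_s, (x,α) ≥ 0 for α ∈ Π_l, (x,θ) ≤ 1}`. Then:
(1) `w = v·t_r ∈ Ŵ` is `s`-minimal iff `w` is dominant and `v(r) ∈ D^(s)_min ∩ Q∨`;
(2) the map `Ŵ^(s)_min → D^(s)_min ∩ Q∨` sending `w = v·t_r` to `v(r)` is a bijection. -/
theorem statement7 {V : Type*} [NormedAddCommGroup V] [InnerProductSpace ℝ V] {p : ℕ}
    (RS : RootSystemData V p) (htwo : RS.TwoLengths) :
    (∀ (v : V ≃ₗ[ℝ] V) (r : V),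
      RS.IsSMinimalPair v r ↔ RS.IsDominantPair v r ∧
        v r ∈ {x : V | (∀ i, RS.IsShort (RS.simpleRoot i) → -1 ≤ ⟪x, RS.simpleRoot i⟫) ∧
            (∀ i, ¬ RS.IsShort (RS.simpleRoot i) → 0 ≤ ⟪x, RS.simpleRoot i⟫) ∧
            ⟪x, RS.θ⟫ ≤ 1} ∩ (RS.corootLattice : Set V)) ∧
    Set.BijOn (fun vr : (V ≃ₗ[ℝ] V) × V => vr.1 vr.2)
      {vr : (V ≃ₗ[ℝ] V) × V | RS.IsSMinimalPair vr.1 vr.2}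
      ({x : V | (∀ i, RS.IsShort (RS.simpleRoot i) → -1 ≤ ⟪x, RS.simpleRoot i⟫) ∧
          (∀ i, ¬ RS.IsShort (RS.simpleRoot i) → 0 ≤ ⟪x, RS.simpleRoot i⟫) ∧
          ⟪x, RS.θ⟫ ≤ 1} ∩ (RS.corootLattice : Set V)) :=
  statement7_general RS
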